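/- arXiv:1211.4810 — 4 statements merged into one kernel-verified Lean document; each statement's English description precedes it below -/
import Mathlib

section
/- The series ∑_{q=2}^{∞} φ(q)/(2^q − 1)^2 converges and its sum is strictly less than 25/56. -/
/-! Since `φ n ≤ n` and `2 ^ n - 1 ≥ (3/4) 2 ^ n` for `n ≥ 2`, the terms are dominated by
`(16/9) n 4⁻ⁿ`, and `∑_{n ≥ 2} n 4⁻ⁿ = 4/9 - 1/4 = 7/36`, so the sum is at most
`28/81 < 25/56`. -/

open Nat

lemma three_quarters_mul_two_pow_le_two_pow_sub_one {n : ℕ} (hn : 2 ≤ n) :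
    3 / 4 * (2 : ℝ) ^ n ≤ 2 ^ n - 1 := by
  have : (2 : ℝ) ^ 2 ≤ 2 ^ n := pow_le_pow_right₀ (by norm_num) hn
  linarith

lemma totient_div_two_pow_sub_one_sq_le {n : ℕ} (hn : 2 ≤ n) :
    (φ n : ℝ) / (2 ^ n - 1) ^ 2 ≤ 16 / 9 * (n * (1 / 4) ^ n) := by
  have hden : (3 / 4 * (2 : ℝ) ^ n) ^ 2 ≤ (2 ^ n - 1) ^ 2 :=
    pow_le_pow_left₀ (by positivity) (three_quarters_mul_two_pow_le_two_pow_sub_one hn) 2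
  calc (φ n : ℝ) / (2 ^ n - 1) ^ 2 ≤ n / (3 / 4 * 2 ^ n) ^ 2 :=
        div_le_div₀ (by positivity) (by exact_mod_cast totient_le n) (by positivity) hden
    _ = 16 / 9 * (n * (1 / 4) ^ n) := by
        rw [mul_pow, ← pow_mul, mul_comm n, pow_mul, one_div_pow]
        field_simp
        ring

lemma tsum_coe_add_two_mul_geometric {r : ℝ} (hr : ‖r‖ < 1) :
    ∑' n : ℕ, ((n + 2 : ℕ) : ℝ) * r ^ (n + 2) = r / (1 - r) ^ 2 - r := by
  have h := (summable_pow_mul_geometric_of_norm_lt_one 1 hr).sum_add_tsum_nat_add 2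
  simp only [pow_one, Finset.sum_range_succ, Finset.sum_range_zero] at h
  rw [tsum_coe_mul_geometric_of_norm_lt_one hr] at h
  push_cast at h ⊢
  linarith

/-- The series `∑_{q=2}^∞ φ(q) / (2^q - 1)^2` converges and its sum is strictly
less than `25/56`. -/
theorem sum_totient_over_two_pow_sub_one_sq_lt :
    Summable (fun q : ℕ => (Nat.totient (q + 2) : ℝ) / (2 ^ (q + 2) - 1) ^ 2) ∧
    ∑' q : ℕ, (Nat.totient (q + 2) : ℝ) / (2 ^ (q + 2) - 1) ^ 2 < 25 / 56 := by
  have hr : ‖(1 / 4 : ℝ)‖ < 1 := by norm_num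
  have hmajorant : Summable fun q : ℕ => 16 / 9 * (((q + 2 : ℕ) : ℝ) * (1 / 4) ^ (q + 2)) := by
    refine Summable.mul_left _
      ((summable_nat_add_iff (f := fun n : ℕ => (n : ℝ) * (1 / 4 : ℝ) ^ n) 2).2 ?_)
    simpa only [pow_one] using summable_pow_mul_geometric_of_norm_lt_one 1 hr
  have hle : ∀ q : ℕ, (φ (q + 2) : ℝ) / (2 ^ (q + 2) - 1) ^ 2 ≤
      16 / 9 * (((q + 2 : ℕ) : ℝ) * (1 / 4) ^ (q + 2)) :=
    fun q => totient_div_two_pow_sub_one_sq_le (by omega)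
  have hsum := Summable.of_nonneg_of_le (fun q => by positivity) hle hmajorant
  refine ⟨hsum, ?_⟩
  calc ∑' q : ℕ, (φ (q + 2) : ℝ) / (2 ^ (q + 2) - 1) ^ 2
      ≤ ∑' q : ℕ, 16 / 9 * (((q + 2 : ℕ) : ℝ) * (1 / 4) ^ (q + 2)) :=
        hsum.tsum_le_tsum hle hmajorant
    _ = 16 / 9 * (1 / 4 / (1 - 1 / 4) ^ 2 - 1 / 4) := by
        rw [tsum_mul_left, tsum_coe_add_two_mul_geometric hr]
    _ < 25 / 56 := by norm_num
end

section
/- Fix θ₀ ∈ (0, 1) and for real θ set α = e^{2πiθ₀}, β(θ) = e^{2πi(θ−θ₀)}, γ(θ) = (2 − α − β(θ))/(1 − αβ(θ)), σ₁(θ) = α + β(θ) + γ(θ) and σ₂(θ) = αβ(θ) + αγ(θ) + β(θ)γ(θ). Then, as θ tends to 0 through nonzero real values, |σ₁(θ)| tends to +∞ and σ₂(θ)/σ₁(θ) tends to 2cos(2πθ₀). -/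
/-!
With `s = α + β` and `p = αβ` one has `σ₁ = s + γ` and `σ₂ = p + sγ`. Since `αβ(θ) = e^{2πiθ}`,
the denominator `1 - αβ(θ)` of `γ` has a simple zero at `θ = 0`, while its numerator tends to
`2 - s(0) = 2 - 2cos(2πθ₀) ≠ 0`. So `γ` has a pole there, which forces `|σ₁| → ∞` and
`σ₂/σ₁ = (p + sγ)/(s + γ) → s(0)`.
-/

open Complex Filter Topology

section LimitsNearPole

variable {ι : Type*} {l : Filter ι} {s p N D : ι → ℂ} {s₀ p₀ c : ℂ}

theorem tendsto_norm_add_div_atTop_of_tendsto_nhdsNE_zero (hs : Tendsto s l (𝓝 s₀))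
    (hN : Tendsto N l (𝓝 c)) (hc : c ≠ 0) (hD : Tendsto D l (𝓝[≠] 0)) :
    Tendsto (fun i => ‖s i + N i / D i‖) l atTop := by
  have hquot : Tendsto (fun i => ‖N i / D i‖) l atTop := by
    simp only [div_eq_mul_inv, norm_mul]
    exact hN.norm.pos_mul_atTop (norm_pos_iff.2 hc)
      (tendsto_norm_inv_nhdsNE_zero_atTop.comp hD)
  refine tendsto_atTop_mono (fun i => ?_) (hquot.atTop_add hs.norm.neg)
  linarith [norm_le_add_norm_add' (s i) (N i / D i)]

theorem tendsto_add_mul_div_div_add_div_of_tendsto_nhdsNE_zero (hs : Tendsto s l (𝓝 s₀))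
    (hp : Tendsto p l (𝓝 p₀)) (hN : Tendsto N l (𝓝 c)) (hc : c ≠ 0) (hD : Tendsto D l (𝓝[≠] 0)) :
    Tendsto (fun i => (p i + s i * (N i / D i)) / (s i + N i / D i)) l (𝓝 s₀) := by
  obtain ⟨hD₀, hD_ne⟩ := tendsto_nhdsWithin_iff.1 hD
  have hlim : Tendsto (fun i => (p i * D i + s i * N i) / (s i * D i + N i)) l
      (𝓝 ((p₀ * 0 + s₀ * c) / (s₀ * 0 + c))) :=
    ((hp.mul hD₀).add (hs.mul hN)).div ((hs.mul hD₀).add hN) (by simpa using hc)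
  rw [mul_zero, mul_zero, zero_add, zero_add, mul_div_cancel_right₀ _ hc] at hlim
  refine hlim.congr' (hD_ne.mono fun i (hi : D i ≠ 0) => ?_)
  show _ = (p i + s i * (N i / D i)) / (s i + N i / D i)
  rw [← mul_div_mul_right (p i + _) _ hi, add_mul, add_mul, mul_assoc, div_mul_cancel₀ _ hi]

end LimitsNearPole

theorem Real.cos_two_pi_mul_ne_one_of_mem_Ioo {x : ℝ} (hx : x ∈ Set.Ioo 0 1) :
    Real.cos (2 * Real.pi * x) ≠ 1 := by
  obtain ⟨hx₀, hx₁⟩ := hx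
  have hpi := Real.pi_pos
  rw [Ne, Real.cos_eq_one_iff_of_lt_of_lt (by nlinarith) (by nlinarith)]
  positivity

theorem exp_two_pi_I_mul_add_exp_neg (x : ℝ) :
    exp (2 * Real.pi * I * x) + exp (-(2 * Real.pi * I * x)) =
      ((2 * Real.cos (2 * Real.pi * x) : ℝ) : ℂ) := by
  push_cast
  rw [two_cos]
  ring_nf

theorem tendsto_one_sub_exp_two_pi_I_mul_nhdsNE :
    Tendsto (fun θ : ℝ => 1 - exp (2 * Real.pi * I * θ)) (𝓝[≠] 0) (𝓝[≠] 0) := by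
  have h : HasDerivAt (fun θ : ℝ => 1 - exp (2 * Real.pi * I * θ))
      (-(exp (2 * Real.pi * I * ((0 : ℝ) : ℂ)) * (2 * Real.pi * I * 1))) 0 :=
    (((hasDerivAt_id (0 : ℝ)).ofReal_comp.const_mul (2 * Real.pi * I)).cexp).const_sub 1
  simpa using h.tendsto_nhdsNE (by simp [Real.pi_ne_zero])

/-- Fix `θ₀ ∈ (0, 1)`, and set `α = e^{2πiθ₀}`, `β(θ) = e^{2πi(θ - θ₀)}`,
`γ(θ) = (2 - α - β(θ)) / (1 - αβ(θ))`, `σ₁(θ) = α + β(θ) + γ(θ)` and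
`σ₂(θ) = αβ(θ) + αγ(θ) + β(θ)γ(θ)`. Then, as the real parameter `θ` tends to `0` through
nonzero values, `|σ₁(θ)| → +∞` and `σ₂(θ)/σ₁(θ) → 2cos(2πθ₀)`. -/
theorem lambda_theta_tendsto_infinity_point (θ₀ : ℝ) (hθ₀ : θ₀ ∈ Set.Ioo (0 : ℝ) 1)
    (α : ℂ) (β γ σ₁ σ₂ : ℝ → ℂ)
    (hα : α = Complex.exp (2 * Real.pi * Complex.I * θ₀))
    (hβ : ∀ θ : ℝ, β θ = Complex.exp (2 * Real.pi * Complex.I * (θ - θ₀)))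
    (hγ : ∀ θ : ℝ, γ θ = (2 - α - β θ) / (1 - α * β θ))
    (hσ₁ : ∀ θ : ℝ, σ₁ θ = α + β θ + γ θ)
    (hσ₂ : ∀ θ : ℝ, σ₂ θ = α * β θ + α * γ θ + β θ * γ θ) :
    Tendsto (fun θ : ℝ => ‖σ₁ θ‖) (nhdsWithin 0 {0}ᶜ) atTop ∧
    Tendsto (fun θ : ℝ => σ₂ θ / σ₁ θ) (nhdsWithin 0 {0}ᶜ)
      (nhds ((2 * Real.cos (2 * Real.pi * θ₀) : ℝ) : ℂ)) := by
  have hαβ : ∀ θ : ℝ, α * β θ = exp (2 * Real.pi * I * θ) := fun θ => by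
    rw [hα, hβ, ← exp_add]
    ring_nf
  have hβ_cont : Continuous β := by
    rw [funext hβ]
    fun_prop
  have hsum : α + β 0 = ((2 * Real.cos (2 * Real.pi * θ₀) : ℝ) : ℂ) := by
    rw [hα, hβ, ← exp_two_pi_I_mul_add_exp_neg]
    push_cast
    ring_nf
  have hβ_lim : Tendsto β (𝓝[≠] 0) (𝓝 (β 0)) :=
    hβ_cont.continuousAt.mono_left nhdsWithin_le_nhds
  have hs := tendsto_const_nhds (x := α).add hβ_lim
  have hp := tendsto_const_nhds (x := α).mul hβ_lim
  have hN := tendsto_const_nhds (x := (2 : ℂ)).sub hs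
  have hc : 2 - (α + β 0) ≠ 0 := by
    have := Real.cos_two_pi_mul_ne_one_of_mem_Ioo hθ₀
    rw [hsum]
    norm_cast
    contrapose! this
    linarith
  have hD : Tendsto (fun θ : ℝ => 1 - α * β θ) (𝓝[≠] 0) (𝓝[≠] 0) := by
    simpa only [hαβ] using tendsto_one_sub_exp_two_pi_I_mul_nhdsNE
  have hσ₁' : σ₁ = fun θ => (α + β θ) + (2 - (α + β θ)) / (1 - α * β θ) :=
    funext fun θ => by rw [hσ₁, hγ]; ring
  have hσ₂' : σ₂ = fun θ => α * β θ + (α + β θ) * ((2 - (α + β θ)) / (1 - α * β θ)) :=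
    funext fun θ => by rw [hσ₂, hγ]; ring
  rw [hσ₁', hσ₂', ← hsum]
  exact ⟨tendsto_norm_add_div_atTop_of_tendsto_nhdsNE_zero hs hN hc hD,
    tendsto_add_mul_div_div_add_div_of_tendsto_nhdsNE_zero hs hp hN hc hD⟩
end

section
/- Let P, Q ∈ ℂ[X] with deg P ≤ 2 and deg Q = 2, and let R = P − X·Q (so deg R = 3). Suppose R has three distinct roots z₁, z₂, z₃ with Q(zᵢ) ≠ 0 for each i, and define the multipliers λᵢ = (P'(zᵢ)Q(zᵢ) − P(zᵢ)Q'(zᵢ))/Q(zᵢ)² (the derivative of f = P/Q at the fixed point zᵢ). If λᵢ ≠ 1 for i = 1, 2, 3, then 1/(1−λ₁) + 1/(1−λ₂) + 1/(1−λ₃) = 1. -/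
/-!
At a fixed point `z` of `f = P/Q` we have `P(z) = z Q(z)`, hence `1 - f'(z) = -R'(z)/Q(z)` with
`R = P - X Q`, and the index `1/(1 - f'(z))` is `-Q(z)/R'(z)`. Since `R` is a cubic with leading
coefficient `-q₂` vanishing at the three `zᵢ`, `R'(zᵢ) = -q₂ ∏_{j ≠ i} (zᵢ - zⱼ)`, and by Lagrange
interpolation `∑ Q(zᵢ) / ∏_{j ≠ i} (zᵢ - zⱼ)` is the `X²`-coefficient `q₂` of `Q`. So the indices
sum to `q₂ / q₂ = 1`.
-/

open Polynomial Finset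

theorem Lagrange.eq_C_leadingCoeff_mul_nodal {F ι : Type*} [Field F] {s : Finset ι} {v : ι → F}
    {R : F[X]} (hvs : Set.InjOn v s) (hdeg : R.degree = #s) (hroot : ∀ i ∈ s, R.eval (v i) = 0) :
    R = C R.leadingCoeff * nodal s v := by
  have hlc : R.leadingCoeff ≠ 0 := leadingCoeff_ne_zero.2 (by rintro rfl; simp at hdeg)
  refine eq_of_degree_le_of_eval_index_eq s hvs hdeg.le ?_ ?_ ?_
  · rw [degree_C_mul hlc, degree_nodal, hdeg]
  · rw [leadingCoeff_mul, leadingCoeff_C, nodal_monic.leadingCoeff, mul_one]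
  · intro i hi
    rw [hroot i hi, eval_mul, eval_nodal_at_node hi, mul_zero]

theorem Lagrange.sum_eval_div_eval_derivative {F ι : Type*} [Field F] [DecidableEq ι]
    {s : Finset ι} {v : ι → F} {R Q : F[X]} (hvs : Set.InjOn v s) (hdeg : R.degree = #s)
    (hroot : ∀ i ∈ s, R.eval (v i) = 0) (hQ : Q.degree < #s) :
    ∑ i ∈ s, Q.eval (v i) / R.derivative.eval (v i) = Q.coeff (#s - 1) / R.leadingCoeff := by
  set c := R.leadingCoeff
  have hR : R = C c * nodal s v := eq_C_leadingCoeff_mul_nodal hvs hdeg hroot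
  rw [coeff_eq_sum hvs hQ, sum_div, hR]
  refine sum_congr rfl fun i hi => ?_
  rw [derivative_C_mul, eval_mul, eval_C, eval_nodal_derivative_eval_node_eq hi, eval_nodal,
    div_mul_eq_div_div_swap]

theorem one_div_one_sub_multiplier_eq {K : Type*} [Field K] {P Q : K[X]} {z : K}
    (hfix : (P - X * Q).eval z = 0) (hQz : Q.eval z ≠ 0) :
    1 / (1 - (P.derivative.eval z * Q.eval z - P.eval z * Q.derivative.eval z) / Q.eval z ^ 2)
      = -(Q.eval z / (P - X * Q).derivative.eval z) := by
  have hPz : P.eval z = z * Q.eval z := by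
    rwa [eval_sub, eval_mul, eval_X, sub_eq_zero] at hfix
  have hone_sub : 1 - (P.derivative.eval z * Q.eval z - P.eval z * Q.derivative.eval z) /
      Q.eval z ^ 2 = -(P - X * Q).derivative.eval z / Q.eval z := by
    simp only [derivative_sub, derivative_mul, derivative_X, one_mul, eval_sub, eval_add,
      eval_mul, eval_X, hPz]
    field_simp
    ring
  rw [hone_sub, one_div_div, div_neg]

theorem holomorphic_index_formula_general (P Q : Polynomial ℂ)
    (hP : P.degree ≤ 2) (hQ : Q.degree = 2)
    (z : Fin 3 → ℂ) (hz : Function.Injective z)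
    (hroot : ∀ i, (P - Polynomial.X * Q).eval (z i) = 0)
    (hQz : ∀ i, Q.eval (z i) ≠ 0)
    (lam : Fin 3 → ℂ)
    (hlam : ∀ i, lam i =
      (P.derivative.eval (z i) * Q.eval (z i) - P.eval (z i) * Q.derivative.eval (z i)) /
        (Q.eval (z i)) ^ 2) :
    1 / (1 - lam 0) + 1 / (1 - lam 1) + 1 / (1 - lam 2) = 1 := by
  have hXQ : (X * Q).degree = 3 := by rw [X_mul, degree_mul_X, hQ]; rfl
  have hlt : P.degree < (X * Q).degree := hXQ ▸ hP.trans_lt (by decide)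
  have hQlc : Q.leadingCoeff ≠ 0 := leadingCoeff_ne_zero.2 (by rintro rfl; simp at hQ)
  have hRlc : (P - X * Q).leadingCoeff = -Q.leadingCoeff := by
    rw [leadingCoeff_sub_of_degree_lt' hlt, X_mul, leadingCoeff_mul_X]
  have hQ2 : Q.coeff (3 - 1) = Q.leadingCoeff := by
    rw [leadingCoeff, natDegree_eq_of_degree_eq_some hQ]
  have hsum : ∑ i, Q.eval (z i) / (P - X * Q).derivative.eval (z i) = -1 := by
    rw [Lagrange.sum_eval_div_eval_derivative hz.injOn
      (by rw [degree_sub_eq_right_of_degree_lt hlt, hXQ]; rfl) (fun i _ => hroot i)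
      (by rw [hQ]; decide), hRlc, card_univ, Fintype.card_fin, hQ2, div_neg, div_self hQlc]
  rw [Fin.sum_univ_three] at hsum
  simp only [hlam, one_div_one_sub_multiplier_eq (hroot _) (hQz _)]
  linear_combination -hsum

/-- Holomorphic fixed point index formula for a quadratic rational map `f = P/Q` with three
distinct finite fixed points `z i` (roots of `R = P - X·Q`), none of which is a pole: if the
multipliers `λ i = f'(z i)` are all `≠ 1`, then `∑ 1/(1 - λ i) = 1`. -/
theorem holomorphic_index_formula (P Q : Polynomial ℂ)
    (hP : P.degree ≤ 2) (hQ : Q.degree = 2)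
    (z : Fin 3 → ℂ) (hz : Function.Injective z)
    (hroot : ∀ i, (P - Polynomial.X * Q).eval (z i) = 0)
    (hQz : ∀ i, Q.eval (z i) ≠ 0)
    (lam : Fin 3 → ℂ)
    (hlam : ∀ i, lam i =
      (P.derivative.eval (z i) * Q.eval (z i) - P.eval (z i) * Q.derivative.eval (z i)) /
        (Q.eval (z i)) ^ 2)
    (hne : ∀ i, lam i ≠ 1) :
    1 / (1 - lam 0) + 1 / (1 - lam 1) + 1 / (1 - lam 2) = 1 :=
  holomorphic_index_formula_general P Q hP hQ z hz hroot hQz lam hlam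
end

section
/- Let P, Q ∈ ℂ[X] with deg P ≤ 2 and deg Q = 2, and let R = P − X·Q (so deg R = 3). Suppose R has three distinct roots z₁, z₂, z₃ with Q(zᵢ) ≠ 0 for each i, and define the multipliers λᵢ = (P'(zᵢ)Q(zᵢ) − P(zᵢ)Q'(zᵢ))/Q(zᵢ)² (the derivative of f = P/Q at the fixed point zᵢ). Then λ₁λ₂λ₃ = λ₁ + λ₂ + λ₃ − 2. -/
/-!
At a fixed point `z` of `f = P / Q` we have `P z = z * Q z`, so the quotient rule gives
`f' z = 1 + R' z / Q z` with `R = P - X * Q`. When `R` has `n + 1` distinct roots `zᵢ`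
(`n = deg Q ≥ deg P`) it equals `-c * ∏ (X - zᵢ)`, `c` the leading coefficient of `Q`, hence
`1 / (1 - λᵢ) = Q zᵢ / (c * ∏_{j ≠ i} (zᵢ - zⱼ))`. Lagrange interpolation of `Q` at the `zᵢ`
identifies the sum of these with `c / c`, which is the holomorphic fixed point formula
`∑ 1 / (1 - λᵢ) = 1`. For three fixed points, clearing denominators gives `σ₃ = σ₁ - 2`.
-/

open Polynomial Finset Lagrange

variable {K : Type*} [Field K]

noncomputable def multiplier (P Q : K[X]) (z : K) : K :=
  (P.derivative.eval z * Q.eval z - P.eval z * Q.derivative.eval z) / Q.eval z ^ 2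

theorem multiplier_eq_one_add {P Q : K[X]} {z : K} (hfix : (P - X * Q).eval z = 0)
    (hQ : Q.eval z ≠ 0) :
    multiplier P Q z = 1 + (P - X * Q).derivative.eval z / Q.eval z := by
  have hP : P.eval z = z * Q.eval z := by
    simpa [sub_eq_zero] using hfix
  simp only [multiplier, derivative_sub, derivative_mul, derivative_X, eval_sub, eval_add,
    eval_mul, eval_X, one_mul, hP]
  field_simp
  ring

theorem prod_eq_sum_sub_two_of_sum_inv_one_sub_eq_one {μ : Fin 3 → K}
    (h : ∑ i, (1 - μ i)⁻¹ = 1) (hμ : ∀ i, μ i ≠ 1) :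
    μ 0 * μ 1 * μ 2 = μ 0 + μ 1 + μ 2 - 2 := by
  have h0 : 1 - μ 0 ≠ 0 := sub_ne_zero.mpr (hμ 0).symm
  have h1 : 1 - μ 1 ≠ 0 := sub_ne_zero.mpr (hμ 1).symm
  have h2 : 1 - μ 2 ≠ 0 := sub_ne_zero.mpr (hμ 2).symm
  simp only [Fin.sum_univ_three] at h
  field_simp at h
  linear_combination h

section Nodes

variable {ι : Type*} {s : Finset ι} {v : ι → K}

theorem eq_C_coeff_mul_nodal (hvs : Set.InjOn v s) {p : K[X]} (hdeg : p.natDegree ≤ #s)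
    (hroot : ∀ i ∈ s, p.eval (v i) = 0) :
    p = C (p.coeff #s) * nodal s v := by
  refine sub_eq_zero.mp (eq_zero_of_degree_lt_of_eval_index_eq_zero s hvs ?_ ?_)
  · rw [degree_lt_iff_coeff_zero]
    intro m hm
    rcases hm.eq_or_lt with rfl | hlt
    · have hmonic : (nodal s v).coeff #s = 1 := by
        simpa [natDegree_nodal] using (nodal_monic (s := s) (v := v)).coeff_natDegree
      rw [coeff_sub, coeff_C_mul, hmonic, mul_one, sub_self]
    · rw [coeff_sub, coeff_C_mul, coeff_eq_zero_of_natDegree_lt (hdeg.trans_lt hlt),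
        coeff_eq_zero_of_natDegree_lt (natDegree_nodal.trans_lt hlt)]
      ring
  · intro i hi
    simp [hroot i hi, eval_nodal_at_node hi]

variable {P Q : K[X]}

theorem sub_X_mul_eq_C_mul_nodal (hvs : Set.InjOn v s) (hs : #s = Q.natDegree + 1)
    (hP : P.natDegree ≤ Q.natDegree) (hfix : ∀ i ∈ s, (P - X * Q).eval (v i) = 0) :
    P - X * Q = C (-Q.leadingCoeff) * nodal s v := by
  have hdeg : (P - X * Q).natDegree ≤ #s := by
    refine (natDegree_sub_le _ _).trans (max_le (by omega) ?_)
    exact natDegree_mul_le.trans (by rw [natDegree_X]; omega)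
  have hcoeff : (P - X * Q).coeff #s = -Q.leadingCoeff := by
    rw [hs, coeff_sub, coeff_X_mul, coeff_eq_zero_of_natDegree_lt (by omega), zero_sub,
      leadingCoeff]
  rw [← hcoeff]
  exact eq_C_coeff_mul_nodal hvs hdeg hfix

variable [DecidableEq ι]

theorem one_sub_multiplier_eq (hvs : Set.InjOn v s) (hs : #s = Q.natDegree + 1)
    (hP : P.natDegree ≤ Q.natDegree) (hfix : ∀ i ∈ s, (P - X * Q).eval (v i) = 0)
    (hQ : ∀ i ∈ s, Q.eval (v i) ≠ 0) {i : ι} (hi : i ∈ s) :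
    1 - multiplier P Q (v i) =
      Q.leadingCoeff * (∏ j ∈ s.erase i, (v i - v j)) / Q.eval (v i) := by
  rw [multiplier_eq_one_add (hfix i hi) (hQ i hi), sub_X_mul_eq_C_mul_nodal hvs hs hP hfix,
    derivative_C_mul, eval_C_mul, eval_nodal_derivative_eval_node_eq hi, eval_nodal]
  ring

theorem multiplier_ne_one (hvs : Set.InjOn v s) (hs : #s = Q.natDegree + 1)
    (hP : P.natDegree ≤ Q.natDegree) (hfix : ∀ i ∈ s, (P - X * Q).eval (v i) = 0)
    (hQ : ∀ i ∈ s, Q.eval (v i) ≠ 0) {i : ι} (hi : i ∈ s) :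
    multiplier P Q (v i) ≠ 1 := by
  have hc : Q.leadingCoeff ≠ 0 := leadingCoeff_ne_zero.mpr fun h => hQ i hi (by simp [h])
  rw [ne_comm, ← sub_ne_zero, one_sub_multiplier_eq hvs hs hP hfix hQ hi]
  refine div_ne_zero (mul_ne_zero hc (prod_ne_zero_iff.mpr fun j hj => ?_)) (hQ i hi)
  exact sub_ne_zero.mpr fun h => (mem_erase.mp hj).1 (hvs (mem_erase.mp hj).2 hi h.symm)

theorem sum_inv_one_sub_multiplier (hvs : Set.InjOn v s) (hs : #s = Q.natDegree + 1)
    (hP : P.natDegree ≤ Q.natDegree) (hfix : ∀ i ∈ s, (P - X * Q).eval (v i) = 0)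
    (hQ : ∀ i ∈ s, Q.eval (v i) ≠ 0) :
    ∑ i ∈ s, (1 - multiplier P Q (v i))⁻¹ = 1 := by
  obtain ⟨i, hi⟩ : s.Nonempty := by rw [← card_pos]; omega
  have hc : Q.leadingCoeff ≠ 0 := leadingCoeff_ne_zero.mpr fun h => hQ i hi (by simp [h])
  have hQdeg : Q.degree < #s := by
    rw [hs]; exact degree_le_natDegree.trans_lt (by exact_mod_cast Nat.lt_succ_self _)
  calc ∑ i ∈ s, (1 - multiplier P Q (v i))⁻¹
      = Q.leadingCoeff⁻¹ * ∑ i ∈ s, Q.eval (v i) / ∏ j ∈ s.erase i, (v i - v j) := by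
        rw [mul_sum]
        refine sum_congr rfl fun i hi => ?_
        rw [one_sub_multiplier_eq hvs hs hP hfix hQ hi]
        field_simp
    _ = 1 := by
        rw [← coeff_eq_sum hvs hQdeg, hs, Nat.add_sub_cancel, ← leadingCoeff, inv_mul_cancel₀ hc]

end Nodes

/-- Milnor's relation `σ₃ = σ₁ - 2` between the elementary symmetric functions of the fixed
point multipliers of a quadratic rational map `f = P/Q` with three distinct finite fixed
points `z i` (roots of `R = P - X·Q`), none of which is a pole:
`λ₁λ₂λ₃ = λ₁ + λ₂ + λ₃ - 2` where `λ i = f'(z i)`. -/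
theorem milnor_sigma_three_relation (P Q : Polynomial ℂ)
    (hP : P.degree ≤ 2) (hQ : Q.degree = 2)
    (z : Fin 3 → ℂ) (hz : Function.Injective z)
    (hroot : ∀ i, (P - Polynomial.X * Q).eval (z i) = 0)
    (hQz : ∀ i, Q.eval (z i) ≠ 0)
    (lam : Fin 3 → ℂ)
    (hlam : ∀ i, lam i =
      (P.derivative.eval (z i) * Q.eval (z i) - P.eval (z i) * Q.derivative.eval (z i)) /
        (Q.eval (z i)) ^ 2)
     :
    lam 0 * lam 1 * lam 2 = lam 0 + lam 1 + lam 2 - 2 := by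
  have hQdeg : Q.natDegree = 2 := natDegree_eq_of_degree_eq_some hQ
  have hs : #(univ : Finset (Fin 3)) = Q.natDegree + 1 := by simp [hQdeg]
  have hPQ : P.natDegree ≤ Q.natDegree := hQdeg ▸ natDegree_le_of_degree_le hP
  have hfix : ∀ i ∈ univ, (P - X * Q).eval (z i) = 0 := fun i _ => hroot i
  have hpole : ∀ i ∈ univ, Q.eval (z i) ≠ 0 := fun i _ => hQz i
  obtain rfl : lam = fun i => multiplier P Q (z i) := funext hlam
  exact prod_eq_sum_sub_two_of_sum_inv_one_sub_eq_one
    (sum_inv_one_sub_multiplier hz.injOn hs hPQ hfix hpole)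
    (fun i => multiplier_ne_one hz.injOn hs hPQ hfix hpole (mem_univ i))
end
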